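/- arXiv:2409.09547 — 2 statements merged into one kernel-verified Lean document; each statement's English description precedes it below -/
import Mathlib

section
/- Define t(n,k) = ∑_{j=0}^{n-k} 2^{n-j-k}·binomial(k+2j, j) for k ≤ n and 0 otherwise. Then t(n,k) = [x^n] (1/((1-2x)·sqrt(1-4x)))·(x·c(x))^k for all k ≤ n. -/
open PowerSeries

noncomputable def Hcb : PowerSeries ℚ := PowerSeries.mk fun n => (Nat.centralBinom n : ℚ)

noncomputable def Ugeo : PowerSeries ℚ := PowerSeries.mk fun n => (2 : ℚ) ^ n

lemma two_eq_C : (2 : PowerSeries ℚ) = C 2 := by rw [map_ofNat]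
lemma four_eq_C : (4 : PowerSeries ℚ) = C 4 := by rw [map_ofNat]

lemma Ugeo_spec : ((1 : PowerSeries ℚ) - 2 * X) * Ugeo = 1 := by
  ext n
  rw [sub_mul, map_sub, one_mul, mul_assoc, two_eq_C, coeff_C_mul]
  cases n with
  | zero => simp [Ugeo]
  | succ m =>
    rw [PowerSeries.coeff_succ_X_mul]
    simp [Ugeo, pow_succ, Nat.succ_ne_zero]
    ring

lemma Hcb_ode : ((1 : PowerSeries ℚ) - 4 * X) * (d⁄dX ℚ Hcb) = 2 * Hcb := by
  ext n
  rw [sub_mul, map_sub, one_mul, mul_assoc, four_eq_C, coeff_C_mul, two_eq_C, coeff_C_mul]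
  cases n with
  | zero =>
    simp [Hcb, PowerSeries.coeff_derivative, Nat.centralBinom]
  | succ m =>
    rw [PowerSeries.coeff_succ_X_mul]
    rw [PowerSeries.coeff_derivative, PowerSeries.coeff_derivative]
    simp only [Hcb, coeff_mk]
    have h := Nat.succ_mul_centralBinom_succ (m + 1)
    have hq : ((m : ℚ) + 1 + 1) * (Nat.centralBinom (m + 2) : ℚ)
        = 2 * (2 * ((m : ℚ) + 1) + 1) * (Nat.centralBinom (m + 1) : ℚ) := by
      exact_mod_cast congrArg (Nat.cast : ℕ → ℚ) h
    push_cast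
    nlinarith [hq]

lemma one_sub_four_X_ne : ((1 : PowerSeries ℚ) - 4 * X) ≠ 0 := by
  intro h
  have := congrArg (coeff 1) h
  rw [map_sub, four_eq_C, coeff_C_mul] at this
  simp at this

lemma s_mul_Hcb (s : PowerSeries ℚ) (hs0 : constantCoeff s = 1)
    (hs : s ^ 2 = 1 - 4 * X) : s * Hcb = 1 := by
  have hds : (d⁄dX ℚ) (s ^ 2) = (d⁄dX ℚ) (1 - 4 * X) := congrArg _ hs
  have hds2 : s * (d⁄dX ℚ s) = -2 := by
    rw [Derivation.leibniz_pow] at hds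
    rw [four_eq_C] at hds
    simp at hds
    have h2ne : (2 : PowerSeries ℚ) ≠ 0 := by
      intro h
      have := congrArg (constantCoeff) h
      rw [map_ofNat] at this
      norm_num at this
    have h2 : (2 : PowerSeries ℚ) * (s * (d⁄dX ℚ s)) = 2 * (-2) := by
      rw [hds, ← four_eq_C]; ring
    exact mul_left_cancel₀ h2ne h2
  have hsd : ((1 : PowerSeries ℚ) - 4 * X) * (d⁄dX ℚ s) = -2 * s := by
    linear_combination s * hds2 - (d⁄dX ℚ s) * hs
  have hdu : (d⁄dX ℚ) (s * Hcb) = 0 := by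
    have h0 : ((1 : PowerSeries ℚ) - 4 * X) * ((d⁄dX ℚ) (s * Hcb)) = 0 := by
      rw [Derivation.leibniz]
      simp only [smul_eq_mul]
      linear_combination s * Hcb_ode + Hcb * hsd
    rcases mul_eq_zero.mp h0 with h | h
    · exact absurd h one_sub_four_X_ne
    · exact h
  have := PowerSeries.derivative.ext (f := s * Hcb) (g := 1) (by rw [hdu]; simp) ?_
  · exact this
  · rw [map_mul, hs0, one_mul]
    simp [Hcb, PowerSeries.constantCoeff_mk, Nat.centralBinom]

noncomputable def Bser (k : ℕ) : PowerSeries ℚ :=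
  PowerSeries.mk fun n => if k ≤ n then ((2 * n - k).choose (n - k) : ℚ) else 0

lemma Bser_zero : Bser 0 = Hcb := by
  ext n
  simp [Bser, Hcb, Nat.centralBinom]

lemma Bser_one : 2 * Bser 1 = Hcb - 1 := by
  ext n
  rw [two_eq_C, coeff_C_mul, map_sub]
  cases n with
  | zero => simp [Bser, Hcb, Nat.centralBinom]
  | succ m =>
    have hle : (1:ℕ) ≤ m + 1 := by omega
    have hne : m + 1 ≠ 0 := by omega
    simp only [Bser, Hcb, coeff_mk, PowerSeries.coeff_one, hne, if_false, hle, if_true, sub_zero,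
      if_pos hle]
    have : 2 * (2 * (m + 1) - 1).choose (m + 1 - 1) = Nat.centralBinom (m + 1) := by
      have h1 : 2 * (m + 1) - 1 = 2 * m + 1 := by omega
      have h2 : m + 1 - 1 = m := by omega
      rw [h1, h2, Nat.centralBinom]
      have := Nat.choose_succ_succ (2 * m + 1) m
      have hsymm : (2 * m + 1).choose (m + 1) = (2 * m + 1).choose m := by
        rw [← Nat.choose_symm (by omega)]
        congr 1
        omega
      have h3 : 2 * (m + 1) = 2 * m + 1 + 1 := by omega
      rw [h3, Nat.choose_succ_succ, hsymm]
      omega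
    exact_mod_cast congrArg (Nat.cast : ℕ → ℚ) this

lemma Bser_rec (k : ℕ) : Bser (k + 2) = Bser (k + 1) - X * Bser k := by
  ext n
  rw [map_sub]
  rcases Nat.lt_or_ge n (k + 1) with h | h
  · have h0 : ¬ (k + 2 ≤ n) := by omega
    have h1 : ¬ (k + 1 ≤ n) := by omega
    cases n with
    | zero => simp [Bser, h0, h1]
    | succ m =>
      rw [PowerSeries.coeff_succ_X_mul]
      have h2 : ¬ (k ≤ m) := by omega
      simp [Bser, h0, h1, h2]
  · rcases Nat.eq_or_lt_of_le h with h' | h'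
    · -- n = k + 1
      subst h'
      have h0 : ¬ (k + 2 ≤ k + 1) := by omega
      rw [PowerSeries.coeff_succ_X_mul]
      simp only [Bser, coeff_mk, h0, if_false, le_refl, if_pos]
      have e1 : 2 * (k + 1) - (k + 1) = k + 1 := by omega
      have e2 : (k + 1) - (k + 1) = 0 := by omega
      have e3 : 2 * k - k = k := by omega
      have e4 : k - k = 0 := by omega
      rw [e1, e2, e3, e4]
      simp
    · -- n ≥ k + 2
      obtain ⟨a, rfl⟩ : ∃ a, n = k + 2 + a := ⟨n - (k + 2), by omega⟩
      have h0 : k + 2 ≤ k + 2 + a := by omega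
      have h1 : k + 1 ≤ k + 2 + a := by omega
      have h2 : k ≤ k + 1 + a := by omega
      have hx : k + 2 + a = (k + 1 + a) + 1 := by omega
      rw [hx, PowerSeries.coeff_succ_X_mul, ← hx]
      simp only [Bser, coeff_mk, h0, h1, h2, if_pos]
      have e1 : 2 * (k + 2 + a) - (k + 2) = k + 2 * a + 2 := by omega
      have e2 : (k + 2 + a) - (k + 2) = a := by omega
      have e3 : 2 * (k + 2 + a) - (k + 1) = k + 2 * a + 3 := by omega
      have e4 : (k + 2 + a) - (k + 1) = a + 1 := by omega
      have e5 : 2 * (k + 1 + a) - k = k + 2 * a + 2 := by omega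
      have e6 : (k + 1 + a) - k = a + 1 := by omega
      rw [e1, e2, e3, e4, e5, e6]
      have := Nat.choose_succ_succ (k + 2 * a + 2) a
      push_cast [this]
      ring

lemma s_mul_Bser (s f : PowerSeries ℚ)
    (hs0 : constantCoeff s = 1) (hs : s ^ 2 = 1 - 4 * X)
    (hf : 2 * f = 1 - s) (k : ℕ) : s * Bser k = f ^ k := by
  have hH := s_mul_Hcb s hs0 hs
  have hf2 : f ^ 2 = f - X := by
    have h4 : (4 : PowerSeries ℚ) * f ^ 2 = 4 * (f - X) := by
      linear_combination (2 * f - 1 - s) * hf + hs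
    have h4ne : (4 : PowerSeries ℚ) ≠ 0 := by
      intro h
      have := congrArg (constantCoeff) h
      rw [map_ofNat] at this
      norm_num at this
    exact mul_left_cancel₀ h4ne h4
  have key : ∀ k, s * Bser k = f ^ k ∧ s * Bser (k + 1) = f ^ (k + 1) := by
    intro k
    induction k with
    | zero =>
      constructor
      · rw [Bser_zero, hH, pow_zero]
      · rw [pow_one]
        have : 2 * (s * Bser 1) = 2 * f := by
          rw [show (2 : ℚ⟦X⟧) * (s * Bser 1) = s * (2 * Bser 1) by ring, Bser_one, hf]
          rw [mul_sub, hH, mul_one]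
        have h2ne : (2 : PowerSeries ℚ) ≠ 0 := by
          intro h
          have := congrArg (constantCoeff) h
          rw [map_ofNat] at this
          norm_num at this
        exact mul_left_cancel₀ h2ne this
    | succ m ih =>
      refine ⟨ih.2, ?_⟩
      rw [Bser_rec]
      linear_combination ih.2 - X * ih.1 - f ^ m * hf2
  exact (key k).1

/-- For `k ≤ n`, `∑_{j=0}^{n-k} 2^{n-j-k}·C(k+2j, j) = [xⁿ] (1/((1-2x)·√(1-4x)))·(x·c(x))ᵏ`. -/
theorem riordan_R2_entries (s f : PowerSeries ℚ)
    (hs0 : constantCoeff s = 1) (hs : s ^ 2 = 1 - 4 * X)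
    (hf : 2 * f = 1 - s) (n k : ℕ) (hkn : k ≤ n) :
    (∑ j ∈ Finset.range (n - k + 1), (2 : ℚ) ^ (n - j - k) * (Nat.choose (k + 2 * j) j : ℚ)) =
      (coeff n) (((1 - 2 * X) * s)⁻¹ * f ^ k) := by
  have hB := s_mul_Bser s f hs0 hs hf k
  have hgoal : ((1 - 2 * X) * s)⁻¹ * f ^ k = Bser k * Ugeo := by
    have hc : constantCoeff ((1 - 2 * X) * s) ≠ 0 := by
      rw [map_mul, hs0, mul_one, map_sub, map_one, two_eq_C, map_mul, constantCoeff_C,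
        constantCoeff_X]
      norm_num
    have hmul : ((1 - 2 * X) * s) * (Bser k * Ugeo) = f ^ k := by
      rw [show ((1 - 2 * X) * s) * (Bser k * Ugeo) = ((1 - 2 * X) * Ugeo) * (s * Bser k) by ring,
        Ugeo_spec, one_mul, hB]
    rw [← hmul, ← mul_assoc, PowerSeries.inv_mul_cancel _ hc, one_mul]
  rw [hgoal, PowerSeries.coeff_mul, Finset.Nat.sum_antidiagonal_eq_sum_range_succ_mk]
  simp only [Bser, Ugeo, coeff_mk]
  have hsub : Finset.Ico k (n + 1) ⊆ Finset.range (n + 1) := by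
    intro x hx
    rw [Finset.mem_range]
    exact (Finset.mem_Ico.mp hx).2
  rw [show n.succ = n + 1 from rfl]
  rw [← Finset.sum_subset hsub (by
    intro x hx hnx
    have : ¬ (k ≤ x) := by
      rw [Finset.mem_range] at hx
      rw [Finset.mem_Ico] at hnx
      omega
    rw [if_neg this, zero_mul])]
  rw [Finset.sum_Ico_eq_sum_range]
  rw [show n + 1 - k = n - k + 1 by omega]
  apply Finset.sum_congr rfl
  intro j hj
  rw [if_pos (Nat.le_add_right k j)]
  rw [show 2 * (k + j) - k = k + 2 * j by omega, show k + j - k = j by omega,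
    show n - (k + j) = n - j - k by omega]
  ring
end

section
/- With s(n,k) defined by s(n,k) = ∑_{j=0}^{k} binomial(n-k+2j, j) for k ≤ n and s(n,k) = ∑_{j=0}^{n} binomial(k-n+2j, j) for k > n, the matrix s is symmetric and its bivariate generating function is 1/((1-xy)(1-x-y)). -/
noncomputable section

def sFun (n k : ℕ) : ℚ :=
  if k ≤ n then ∑ j ∈ Finset.range (k + 1), (Nat.choose (n - k + 2 * j) j : ℚ)
  else ∑ j ∈ Finset.range (n + 1), (Nat.choose (k - n + 2 * j) j : ℚ)

lemma key1 (n k : ℕ) :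
    sFun n k - (if 1 ≤ n ∧ 1 ≤ k then sFun (n - 1) (k - 1) else 0) =
      (Nat.choose (n + k) n : ℚ) := by
  rcases n with _ | m
  · rcases k with _ | l
    · simp [sFun]
    · simp [sFun, Nat.le_zero]
  · rcases k with _ | l
    · simp [sFun]
    · rw [if_pos ⟨Nat.le_add_left _ _, Nat.le_add_left _ _⟩]
      simp only [Nat.add_sub_cancel]
      by_cases h : l ≤ m
      · rw [sFun, if_pos (Nat.succ_le_succ h), sFun, if_pos h, Finset.sum_range_succ]
        have h1 : ∀ j ∈ Finset.range (l + 1),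
            (Nat.choose (m + 1 - (l + 1) + 2 * j) j : ℚ) = Nat.choose (m - l + 2 * j) j := by
          intro j _; congr 2; omega
        rw [Finset.sum_congr rfl h1]
        have h2 : m + 1 - (l + 1) + 2 * (l + 1) = m + 1 + (l + 1) := by omega
        rw [h2]
        have h3 : Nat.choose (m + 1 + (l + 1)) (l + 1) = Nat.choose (m + 1 + (l + 1)) (m + 1) := by
          have h4 := Nat.choose_symm (show l + 1 ≤ m + 1 + (l + 1) by omega)
          rw [show m + 1 + (l + 1) - (l + 1) = m + 1 by omega] at h4
          exact h4.symm
        rw [h3]; ring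
      · rw [sFun, if_neg (by omega), sFun, if_neg (by omega), Finset.sum_range_succ]
        have h1 : ∀ j ∈ Finset.range (m + 1),
            (Nat.choose (l + 1 - (m + 1) + 2 * j) j : ℚ) = Nat.choose (l - m + 2 * j) j := by
          intro j _; congr 2; omega
        rw [Finset.sum_congr rfl h1]
        rw [show l + 1 - (m + 1) + 2 * (m + 1) = m + 1 + (l + 1) by omega]
        ring

lemma key2 (n k : ℕ) :
    (Nat.choose (n + k) n : ℚ) - (if 1 ≤ n then (Nat.choose (n - 1 + k) (n - 1) : ℚ) else 0)
      - (if 1 ≤ k then (Nat.choose (n + (k - 1)) n : ℚ) else 0) =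
      if n = 0 ∧ k = 0 then 1 else 0 := by
  rcases n with _ | m
  · rcases k with _ | l
    · simp
    · simp
  · rcases k with _ | l
    · simp
    · rw [if_pos (Nat.le_add_left _ _), if_pos (Nat.le_add_left _ _), if_neg (by omega)]
      simp only [Nat.add_sub_cancel]
      rw [show m + 1 + (l + 1) = (m + (l + 1)) + 1 by omega,
        Nat.choose_succ_succ (m + (l + 1)) m]
      push_cast
      rw [show m + (l + 1) = m + 1 + l by omega]
      ring

open MvPowerSeries Finsupp

abbrev S : MvPowerSeries (Fin 2) ℚ := fun d => sFun (d 0) (d 1)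
abbrev B : MvPowerSeries (Fin 2) ℚ := fun d => (Nat.choose (d 0 + d 1) (d 0) : ℚ)

lemma le_iff_apply (d : Fin 2 →₀ ℕ) (a b : ℕ) :
    (Finsupp.single 0 a + Finsupp.single 1 b : Fin 2 →₀ ℕ) ≤ d ↔ a ≤ d 0 ∧ b ≤ d 1 := by
  rw [Finsupp.le_def]
  constructor
  · intro h
    have h0 := h 0
    have h1 := h 1
    simp [Finsupp.single_apply] at h0 h1
    exact ⟨h0, h1⟩
  · intro ⟨h0, h1⟩ i
    fin_cases i <;> simp [Finsupp.single_apply, h0, h1]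

lemma eq_zero_iff (d : Fin 2 →₀ ℕ) : d = 0 ↔ d 0 = 0 ∧ d 1 = 0 := by
  constructor
  · intro h; simp [h]
  · intro ⟨h0, h1⟩
    ext i; fin_cases i <;> simpa

lemma SmulXY : S * (1 - MvPowerSeries.X 0 * MvPowerSeries.X 1) = B := by
  ext d
  rw [mul_sub, mul_one, map_sub]
  rw [X_def, X_def, monomial_mul_monomial, mul_one]
  rw [coeff_mul_monomial, coeff_apply, coeff_apply, coeff_apply]
  have hB : B d = (Nat.choose (d 0 + d 1) (d 0) : ℚ) := rfl
  by_cases h : 1 ≤ d 0 ∧ 1 ≤ d 1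
  · rw [if_pos ((le_iff_apply d 1 1).mpr h), mul_one]
    have hsub : S (d - (Finsupp.single 0 1 + Finsupp.single 1 1)) = sFun (d 0 - 1) (d 1 - 1) := by
      show sFun _ _ = _
      congr 1 <;> rw [Finsupp.tsub_apply, Finsupp.add_apply] <;>
        simp [Finsupp.single_apply]
    rw [hsub, hB, ← key1 (d 0) (d 1), if_pos h]
  · rw [if_neg (fun hc => h ((le_iff_apply d 1 1).mp hc)), hB,
      ← key1 (d 0) (d 1), if_neg h]

lemma BmulXY : B * (1 - MvPowerSeries.X 0 - MvPowerSeries.X 1) = 1 := by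
  ext d
  rw [mul_sub, mul_sub, mul_one, map_sub, map_sub]
  rw [X_def (R := ℚ) (0 : Fin 2), X_def (R := ℚ) (1 : Fin 2)]
  rw [coeff_mul_monomial, coeff_mul_monomial, coeff_apply, coeff_apply, coeff_apply]
  rw [coeff_one]
  rw [show (if d = 0 then (1:ℚ) else 0) = (if d 0 = 0 ∧ d 1 = 0 then 1 else 0) from
    if_congr (eq_zero_iff d) rfl rfl]
  have hB : B d = (Nat.choose (d 0 + d 1) (d 0) : ℚ) := rfl
  have e0 : 1 ≤ d 0 → B (d - Finsupp.single 0 1) = (Nat.choose (d 0 - 1 + d 1) (d 0 - 1) : ℚ) := by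
    intro h
    show (Nat.choose _ _ : ℚ) = _
    congr 2 <;> rw [Finsupp.tsub_apply] <;> simp [Finsupp.single_apply]
  have e1 : 1 ≤ d 1 → B (d - Finsupp.single 1 1) = (Nat.choose (d 0 + (d 1 - 1)) (d 0) : ℚ) := by
    intro h
    show (Nat.choose _ _ : ℚ) = _
    congr 2 <;> rw [Finsupp.tsub_apply] <;> simp [Finsupp.single_apply]
  have hkey := key2 (d 0) (d 1)
  by_cases h0 : 1 ≤ d 0 <;> by_cases h1 : 1 ≤ d 1
  · rw [if_pos (Finsupp.single_le_iff.mpr h0), if_pos (Finsupp.single_le_iff.mpr h1),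
      mul_one, mul_one, e0 h0, e1 h1, hB,
      if_neg (show ¬(d 0 = 0 ∧ d 1 = 0) by omega)]
    rw [if_pos h0, if_pos h1, if_neg (show ¬(d 0 = 0 ∧ d 1 = 0) by omega)] at hkey
    linarith [hkey]
  · rw [if_pos (Finsupp.single_le_iff.mpr h0),
      if_neg (fun hc => h1 (Finsupp.single_le_iff.mp hc)), mul_one, e0 h0, hB,
      if_neg (show ¬(d 0 = 0 ∧ d 1 = 0) by omega)]
    rw [if_pos h0, if_neg h1, if_neg (show ¬(d 0 = 0 ∧ d 1 = 0) by omega)] at hkey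
    linarith [hkey]
  · rw [if_neg (fun hc => h0 (Finsupp.single_le_iff.mp hc)),
      if_pos (Finsupp.single_le_iff.mpr h1), mul_one, e1 h1, hB,
      if_neg (show ¬(d 0 = 0 ∧ d 1 = 0) by omega)]
    rw [if_neg h0, if_pos h1, if_neg (show ¬(d 0 = 0 ∧ d 1 = 0) by omega)] at hkey
    linarith [hkey]
  · rw [if_neg (fun hc => h0 (Finsupp.single_le_iff.mp hc)),
      if_neg (fun hc => h1 (Finsupp.single_le_iff.mp hc)), hB,
      if_pos (show d 0 = 0 ∧ d 1 = 0 by omega)]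
    rw [if_neg h0, if_neg h1, if_pos (show d 0 = 0 ∧ d 1 = 0 by omega)] at hkey
    linarith [hkey]

/-- With `s(n,k) = ∑_{j=0}^{k} C(n-k+2j, j)` for `k ≤ n` and
`s(n,k) = ∑_{j=0}^{n} C(k-n+2j, j)` for `k > n`, the matrix `s` is symmetric
and its bivariate generating function is `1/((1-xy)(1-x-y))`. -/
theorem symmetric_matrix_gf :
    (∀ n k : ℕ,
      (if k ≤ n then ∑ j ∈ Finset.range (k + 1), (Nat.choose (n - k + 2 * j) j : ℚ)
        else ∑ j ∈ Finset.range (n + 1), (Nat.choose (k - n + 2 * j) j : ℚ)) =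
      (if n ≤ k then ∑ j ∈ Finset.range (n + 1), (Nat.choose (k - n + 2 * j) j : ℚ)
        else ∑ j ∈ Finset.range (k + 1), (Nat.choose (n - k + 2 * j) j : ℚ))) ∧
    (∀ n k : ℕ,
      (if k ≤ n then ∑ j ∈ Finset.range (k + 1), (Nat.choose (n - k + 2 * j) j : ℚ)
        else ∑ j ∈ Finset.range (n + 1), (Nat.choose (k - n + 2 * j) j : ℚ)) =
      MvPowerSeries.coeff (Finsupp.single 0 n + Finsupp.single 1 k)
        (((1 - MvPowerSeries.X 0 * MvPowerSeries.X 1) *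
          (1 - MvPowerSeries.X 0 - MvPowerSeries.X 1) : MvPowerSeries (Fin 2) ℚ))⁻¹) := by
  constructor
  · intro n k
    by_cases h1 : k ≤ n <;> by_cases h2 : n ≤ k
    · have : n = k := le_antisymm h2 h1
      subst this
      simp
    · rw [if_pos h1, if_neg h2]
    · rw [if_neg h1, if_pos h2]
    · omega
  · intro n k
    have hconst : constantCoeff
        ((1 - MvPowerSeries.X 0 * MvPowerSeries.X 1) *
          (1 - MvPowerSeries.X 0 - MvPowerSeries.X 1) : MvPowerSeries (Fin 2) ℚ) ≠ 0 := by
      simp [constantCoeff_X]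
    have hS : S = (((1 - MvPowerSeries.X 0 * MvPowerSeries.X 1) *
          (1 - MvPowerSeries.X 0 - MvPowerSeries.X 1) : MvPowerSeries (Fin 2) ℚ))⁻¹ := by
      rw [MvPowerSeries.eq_inv_iff_mul_eq_one hconst, ← mul_assoc, SmulXY, BmulXY]
    rw [← hS, coeff_apply]
    have a0 : (Finsupp.single 0 n + Finsupp.single 1 k : Fin 2 →₀ ℕ) 0 = n := by
      simp [Finsupp.single_apply]
    have a1 : (Finsupp.single 0 n + Finsupp.single 1 k : Fin 2 →₀ ℕ) 1 = k := by
      simp [Finsupp.single_apply]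
    rw [show S (Finsupp.single 0 n + Finsupp.single 1 k) =
      sFun ((Finsupp.single 0 n + Finsupp.single 1 k : Fin 2 →₀ ℕ) 0)
           ((Finsupp.single 0 n + Finsupp.single 1 k : Fin 2 →₀ ℕ) 1) from rfl, a0, a1, sFun]

end
end
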